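/- arXiv:2204.13619 — 2 statements merged into one kernel-verified Lean document; each statement's English description precedes it below -/
import Mathlib

section
/- Suppose τ_j = p_0/(p_0 + 2(1−p_0)p_j) for each j = 1,…,k. Then for all θ, θ̂ ∈ (ℝ^d)^n, the expectation over (ξ_0, ξ_1, …, ξ_k) of ‖G(θ) − G(θ̂)‖² satisfies E‖G(θ) − G(θ̂)‖² ≤ (2/p_0)‖∇φ(θ) − ∇φ(θ̂)‖² + Σ_{j=1}^k [2(1−α_j)²/(p_0 + 2(1−p_0)p_j)] ‖∇ψ_j(θ) − ∇ψ_j(θ̂)‖² + (1/(1−p_0)) Σ_{j=1}^k (1/(1−p_j)) ‖∇F_j(θ) − ∇F_j(θ̂)‖², where ∇ψ_j and ∇F_j denote the gradients with respect to the block of coordinates (θ_i)_{i∈I_j}. -/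
open scoped BigOperators

noncomputable section

/-- `E d` is the Euclidean space ℝ^d. -/
abbrev E (d : ℕ) := EuclideanSpace ℝ (Fin d)

/-- `X n d = (ℝ^d)^n` with the ℓ2 product (Euclidean) norm. -/
abbrev X (n d : ℕ) := PiLp 2 (fun _ : Fin n => E d)

/-- The cluster `I_j` of clients assigned to cluster `j` by the assignment map `c`. -/
def clSet {n k : ℕ} (c : Fin n → Fin k) (j : Fin k) : Finset (Fin n) :=
  Finset.univ.filter fun i => c i = j

/-- The weighted cluster average θ̄_j = (Σ_{i∈I_j} γ_i θ_i)/(Σ_{i∈I_j} γ_i). -/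
def clAvg {n k d : ℕ} (c : Fin n → Fin k) (γ : Fin n → ℝ) (j : Fin k)
    (θ : X n d) : E d :=
  (∑ i ∈ clSet c j, γ i)⁻¹ • ∑ i ∈ clSet c j, γ i • θ i

/-- The global average θ̄ = (Σ_j Σ_{i∈I_j} α_j γ_i θ_i)/(Σ_j Σ_{i∈I_j} α_j γ_i). -/
def glAvg {n k d : ℕ} (c : Fin n → Fin k) (γ : Fin n → ℝ) (α : Fin k → ℝ)
    (θ : X n d) : E d :=
  (∑ j, ∑ i ∈ clSet c j, α j * γ i)⁻¹ • ∑ j, ∑ i ∈ clSet c j, (α j * γ i) • θ i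

/-- The within-cluster regularizer ψ_j(θ) = (1/2) Σ_{i∈I_j} γ_i ‖θ_i − θ̄_j‖². -/
def psi {n k d : ℕ} (c : Fin n → Fin k) (γ : Fin n → ℝ) (j : Fin k) (θ : X n d) : ℝ :=
  1/2 * ∑ i ∈ clSet c j, γ i * ‖θ i - clAvg c γ j θ‖ ^ 2

/-- The global regularizer φ(θ) = (1/2) Σ_j α_j Σ_{i∈I_j} γ_i ‖θ_i − θ̄‖². -/
def phi {n k d : ℕ} (c : Fin n → Fin k) (γ : Fin n → ℝ) (α : Fin k → ℝ)
    (θ : X n d) : ℝ :=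
  1/2 * ∑ j, α j * ∑ i ∈ clSet c j, γ i * ‖θ i - glAvg c γ α θ‖ ^ 2

/-- The cluster loss F_j(θ) = Σ_{i∈I_j} f_i(θ_i). -/
def clLoss {n k d : ℕ} (c : Fin n → Fin k) (f : Fin n → E d → ℝ) (j : Fin k)
    (θ : X n d) : ℝ :=
  ∑ i ∈ clSet c j, f i (θ i)

/-- An outcome of the Async-L2GD randomness: the Bernoulli draws (ξ_0, ξ_1, …, ξ_k). -/
abbrev Outcome (k : ℕ) := Bool × (Fin k → Bool)

/-- The probability of an outcome (ξ_0, ξ_1, …, ξ_k) of independent Bernoulli draws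
with parameters (p_0, p_1, …, p_k). -/
def wt {k : ℕ} (p0 : ℝ) (p : Fin k → ℝ) (ω : Outcome k) : ℝ :=
  (if ω.1 then p0 else 1 - p0) * ∏ j, (if ω.2 j then p j else 1 - p j)

/-- The Async-L2GD stochastic gradient oracle G(θ) for the outcome ω = (ξ_0, ξ). -/
def Orc {n k d : ℕ} (c : Fin n → Fin k) (γ : Fin n → ℝ) (α : Fin k → ℝ)
    (τ : Fin k → ℝ) (p0 : ℝ) (p : Fin k → ℝ) (f : Fin n → E d → ℝ)
    (θ : X n d) (ω : Outcome k) : X n d :=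
  WithLp.toLp 2 fun i =>
    if ω.1 then
      (γ i * α (c i) / p0) • (θ i - glAvg c γ α θ)
        + (γ i * τ (c i) * (1 - α (c i)) / p0) • (θ i - clAvg c γ (c i) θ)
    else if ω.2 (c i) then
      (γ i * (1 - τ (c i)) * (1 - α (c i)) / ((1 - p0) * p (c i)))
        • (θ i - clAvg c γ (c i) θ)
    else
      (1 / ((1 - p0) * (1 - p (c i)))) • gradient (f i) (θ i)

/-!
The block of `G(θ)` for a client `i ∈ I_j` depends only on `(ξ₀, ξ_j)` and is an explicit
combination of the `i`-th blocks of `∇φ(θ)`, `∇ψ_j(θ)` and `∇F_j(θ)`. The regularizers are weighted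
variances, whose gradient is read off from the exact expansion
`V(θ + h) = V(θ) + ⟪∇V(θ), h⟫ + V(h)`. Hence the expectation splits into one three-term average per
client. On the `ξ₀ = 1` term, `‖a + t b‖² ≤ 2‖a‖² + 2t²‖b‖²`; the choice of `τ_j` is exactly the one
for which `2τ_j²/p₀ + (1 - τ_j)²/((1 - p₀)p_j) = 2/(p₀ + 2(1 - p₀)p_j)`.
-/

open Finset Asymptotics Filter Topology

theorem hasGradientAt_of_add_eq {F : Type*} [NormedAddCommGroup F] [InnerProductSpace ℝ F]
    [CompleteSpace F] {φ r : F → ℝ} {x g : F}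
    (hφ : ∀ h, φ (x + h) = φ x + inner ℝ g h + r h) (hr : r =O[𝓝 0] fun h => ‖h‖ ^ 2) :
    HasGradientAt φ g x := by
  rw [hasGradientAt_iff_hasFDerivAt, hasFDerivAt_iff_isLittleO_nhds_zero]
  refine (hr.trans_isLittleO (isLittleO_norm_pow_id one_lt_two)).congr_left fun h => ?_
  rw [hφ, InnerProductSpace.toDual_apply_apply]
  ring

section WeightedVariance
variable {ι F : Type*} [NormedAddCommGroup F] [InnerProductSpace ℝ F]

def weightedMean (s : Finset ι) (w : ι → ℝ) (θ : PiLp 2 fun _ : ι => F) : F :=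
  (∑ i ∈ s, w i)⁻¹ • ∑ i ∈ s, w i • θ i

def weightedVar (s : Finset ι) (w : ι → ℝ) (θ : PiLp 2 fun _ : ι => F) : ℝ :=
  1 / 2 * ∑ i ∈ s, w i * ‖θ i - weightedMean s w θ‖ ^ 2

variable (s : Finset ι) (w : ι → ℝ)

theorem weightedMean_add (θ h : PiLp 2 fun _ : ι => F) :
    weightedMean s w (θ + h) = weightedMean s w θ + weightedMean s w h := by
  simp only [weightedMean, PiLp.add_apply, smul_add, sum_add_distrib]

theorem sum_mul_inner_sub_weightedMean (θ h : PiLp 2 fun _ : ι => F) :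
    ∑ i ∈ s, w i * inner ℝ (θ i - weightedMean s w θ) (weightedMean s w h) = 0 := by
  simp only [← real_inner_smul_left, ← sum_inner]
  -- With zero total weight the mean is `0⁻¹ • _ = 0`; otherwise the weighted deviations sum to `0`.
  by_cases hw : ∑ i ∈ s, w i = 0
  · simp [weightedMean, hw]
  · have : ∑ i ∈ s, w i • (θ i - weightedMean s w θ) = 0 := by
      rw [sum_congr rfl fun i _ => smul_sub (w i) (θ i) _, sum_sub_distrib, ← sum_smul,
        weightedMean, smul_smul, mul_inv_cancel₀ hw, one_smul, sub_self]
    rw [this, inner_zero_left]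

variable [Fintype ι]

theorem weightedVar_add [DecidableEq ι] (θ h : PiLp 2 fun _ : ι => F) :
    weightedVar s w (θ + h) = weightedVar s w θ
      + inner ℝ (WithLp.toLp 2 fun i => if i ∈ s then w i • (θ i - weightedMean s w θ) else 0
        : PiLp 2 fun _ : ι => F) h
      + weightedVar s w h := by
  have hgrad : inner ℝ (WithLp.toLp 2 fun i => if i ∈ s then w i • (θ i - weightedMean s w θ)
        else 0 : PiLp 2 fun _ : ι => F) h
      = ∑ i ∈ s, w i * inner ℝ (θ i - weightedMean s w θ) (h i) := by
    rw [PiLp.inner_apply, ← sum_subset (subset_univ s) fun i _ hi => by simp [hi]]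
    exact sum_congr rfl fun i hi => by simp [hi, real_inner_smul_left]
  have hsplit (i : ι) : (θ + h) i - weightedMean s w (θ + h)
      = (θ i - weightedMean s w θ) + (h i - weightedMean s w h) := by
    rw [weightedMean_add, PiLp.add_apply]; abel
  have hcross := sum_mul_inner_sub_weightedMean s w θ h
  simp only [weightedVar, hgrad, hsplit, norm_add_sq_real, inner_sub_right, mul_add, mul_sub,
    sum_add_distrib, sum_sub_distrib, mul_left_comm (w _) 2, ← mul_sum, hcross]
  ring

theorem weightedVar_isBigO :
    weightedVar (F := F) s w =O[𝓝 0] fun h => ‖h‖ ^ 2 := by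
  have hproj (i : ι) : (fun h : PiLp 2 (fun _ : ι => F) => h i) =O[𝓝 0] fun h => ‖h‖ :=
    IsBigO.of_bound 1 (Eventually.of_forall fun h => by simpa using PiLp.norm_apply_le h i)
  have hmean : weightedMean (F := F) s w =O[𝓝 0] fun h => ‖h‖ :=
    ((IsBigO.sum (s := s) fun i _ => (hproj i).const_smul_left (w i)).const_smul_left
      (∑ i ∈ s, w i)⁻¹).congr_left fun h => by simp [weightedMean]
  have hdev (i : ι) : (fun h : PiLp 2 (fun _ : ι => F) => ‖h i - weightedMean s w h‖ ^ 2)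
      =O[𝓝 0] fun h => ‖h‖ ^ 2 :=
    ((hproj i).sub hmean).norm_left.pow 2
  refine ((IsBigO.sum (s := s) fun i _ => (hdev i).const_mul_left (w i)).const_mul_left
    (1 / 2)).congr_left fun h => ?_
  simp [weightedVar]

theorem hasGradientAt_weightedVar [DecidableEq ι] [CompleteSpace F] (θ : PiLp 2 fun _ : ι => F) :
    HasGradientAt (weightedVar s w)
      (WithLp.toLp 2 fun i => if i ∈ s then w i • (θ i - weightedMean s w θ) else 0) θ :=
  hasGradientAt_of_add_eq (weightedVar_add s w θ) (weightedVar_isBigO s w)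

end WeightedVariance

theorem hasGradientAt_sum_apply {ι F : Type*} [Fintype ι] [DecidableEq ι] [NormedAddCommGroup F]
    [InnerProductSpace ℝ F] [CompleteSpace F] {f : ι → F → ℝ} (s : Finset ι)
    {θ : PiLp 2 fun _ : ι => F} (hf : ∀ i ∈ s, DifferentiableAt ℝ (f i) (θ i)) :
    HasGradientAt (fun θ : PiLp 2 (fun _ : ι => F) => ∑ i ∈ s, f i (θ i))
      (WithLp.toLp 2 fun i => if i ∈ s then gradient (f i) (θ i) else 0) θ := by
  have hcoord (i : ι) (hi : i ∈ s) : HasFDerivAt (fun θ : PiLp 2 (fun _ : ι => F) => f i (θ i))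
      ((InnerProductSpace.toDual ℝ F (gradient (f i) (θ i))).comp (PiLp.proj 2 _ i)) θ :=
    (hf i hi).hasGradientAt.hasFDerivAt.comp θ (PiLp.hasFDerivAt_apply 2 θ i)
  rw [hasGradientAt_iff_hasFDerivAt]
  refine (HasFDerivAt.fun_sum hcoord).congr_fderiv (ContinuousLinearMap.ext fun h => ?_)
  rw [InnerProductSpace.toDual_apply_apply, PiLp.inner_apply,
    ← sum_subset (subset_univ s) fun i _ hi => by simp [hi]]
  simp +contextual

theorem sum_prod_mul_eval_of_sum_eq_one {κ β : Type*} [Fintype κ] [DecidableEq κ] [Fintype β]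
    (w : κ → β → ℝ) (hw : ∀ j, ∑ b, w j b = 1) (j₀ : κ) (v : β → ℝ) :
    ∑ g : κ → β, (∏ j, w j (g j)) * v (g j₀) = ∑ b, w j₀ b * v b := by
  have hfactor (g : κ → β) : (∏ j, w j (g j)) * v (g j₀)
      = ∏ j, w j (g j) * if j = j₀ then v (g j) else 1 := by
    rw [prod_mul_distrib, Fintype.prod_ite_eq']
  simp only [hfactor]
  rw [← Fintype.prod_sum fun j b => w j b * if j = j₀ then v b else 1]
  rw [prod_eq_single j₀ (fun j _ hj => by simp [hj, hw j]) (by simp)]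
  simp

section Clusters
variable {n k d : ℕ} (c : Fin n → Fin k)

theorem mem_clSet {j : Fin k} {i : Fin n} : i ∈ clSet c j ↔ c i = j := by
  simp [clSet]

theorem sum_sum_clSet {M : Type*} [AddCommMonoid M] (F : Fin k → Fin n → M) :
    ∑ j, ∑ i ∈ clSet c j, F j i = ∑ i, F (c i) i := by
  rw [← sum_fiberwise univ c fun i => F (c i) i]
  exact sum_congr rfl fun j _ => sum_congr rfl fun i hi => by rw [(mem_filter.1 hi).2]

variable (γ : Fin n → ℝ) (α : Fin k → ℝ)

theorem glAvg_eq_weightedMean (θ : X n d) :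
    glAvg c γ α θ = weightedMean univ (fun i => α (c i) * γ i) θ := by
  rw [glAvg, weightedMean, sum_sum_clSet c fun j i => α j * γ i,
    sum_sum_clSet c fun j i => (α j * γ i) • θ i]

theorem phi_eq_weightedVar : phi (d := d) c γ α = weightedVar univ fun i => α (c i) * γ i := by
  funext θ
  simp only [phi, weightedVar, glAvg_eq_weightedMean]
  congr 1
  simp only [mul_sum, ← mul_assoc]
  exact sum_sum_clSet c fun j i =>
    α j * γ i * ‖θ i - weightedMean univ (fun i => α (c i) * γ i) θ‖ ^ 2

theorem gradient_phi (θ : X n d) :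
    gradient (phi c γ α) θ = WithLp.toLp 2 fun i => (α (c i) * γ i) • (θ i - glAvg c γ α θ) := by
  rw [phi_eq_weightedVar, (hasGradientAt_weightedVar _ _ θ).gradient, glAvg_eq_weightedMean]
  simp

theorem gradient_psi (j : Fin k) (θ : X n d) :
    gradient (psi c γ j) θ
      = WithLp.toLp 2 fun i => if c i = j then γ i • (θ i - clAvg c γ j θ) else 0 := by
  simp only [← mem_clSet c]
  exact (hasGradientAt_weightedVar (clSet c j) γ θ).gradient

theorem gradient_clLoss {f : Fin n → E d → ℝ} (hf : ∀ i, Differentiable ℝ (f i)) (j : Fin k)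
    (θ : X n d) :
    gradient (clLoss c f j) θ
      = WithLp.toLp 2 fun i => if c i = j then gradient (f i) (θ i) else 0 := by
  simp only [← mem_clSet c]
  exact (hasGradientAt_sum_apply (clSet c j) fun i _ => (hf i).differentiableAt).gradient

end Clusters

def oracleBlock {F : Type*} [AddCommGroup F] [Module ℝ F] (p0 q α τ : ℝ) (a b g : F)
    (ξ₀ ξ : Bool) : F :=
  if ξ₀ then p0⁻¹ • (a + (τ * (1 - α)) • b)
  else if ξ then ((1 - τ) * (1 - α) / ((1 - p0) * q)) • b
  else ((1 - p0) * (1 - q))⁻¹ • g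

theorem oracleBlock_sub {F : Type*} [AddCommGroup F] [Module ℝ F] (p0 q α τ : ℝ)
    (a b g a' b' g' : F) (ξ₀ ξ : Bool) :
    oracleBlock p0 q α τ a b g ξ₀ ξ - oracleBlock p0 q α τ a' b' g' ξ₀ ξ
      = oracleBlock p0 q α τ (a - a') (b - b') (g - g') ξ₀ ξ := by
  unfold oracleBlock
  split_ifs <;> module

theorem Orc_apply {n k d : ℕ} (c : Fin n → Fin k) (γ : Fin n → ℝ) (α τ : Fin k → ℝ) (p0 : ℝ)
    (p : Fin k → ℝ) {f : Fin n → E d → ℝ} (hf : ∀ i, Differentiable ℝ (f i)) (θ : X n d)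
    (ω : Outcome k) (i : Fin n) :
    Orc c γ α τ p0 p f θ ω i
      = oracleBlock p0 (p (c i)) (α (c i)) (τ (c i)) (gradient (phi c γ α) θ i)
          (gradient (psi c γ (c i)) θ i) (gradient (clLoss c f (c i)) θ i) ω.1 (ω.2 (c i)) := by
  simp only [Orc, oracleBlock, gradient_phi, gradient_psi, gradient_clLoss c hf, if_true]
  split_ifs <;> module

theorem sum_wt_mul {k : ℕ} (p0 : ℝ) (p : Fin k → ℝ) (j : Fin k) (u : Bool → Bool → ℝ) :
    ∑ ω : Outcome k, wt p0 p ω * u ω.1 (ω.2 j)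
      = p0 * (p j * u true true + (1 - p j) * u true false)
        + (1 - p0) * (p j * u false true + (1 - p j) * u false false) := by
  have hbern (j : Fin k) : ∑ b : Bool, (if b then p j else 1 - p j) = 1 := by simp
  have hmarg (ξ₀ : Bool) : ∑ g : Fin k → Bool, wt p0 p (ξ₀, g) * u ξ₀ (g j)
      = (if ξ₀ then p0 else 1 - p0) * ∑ b, (if b then p j else 1 - p j) * u ξ₀ b := by
    have hwt (g : Fin k → Bool) :
        wt p0 p (ξ₀, g) = (if ξ₀ then p0 else 1 - p0) * ∏ i, if g i then p i else 1 - p i := rfl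
    simp only [hwt, mul_assoc]
    rw [← mul_sum, sum_prod_mul_eval_of_sum_eq_one _ hbern]
  rw [Fintype.sum_prod_type, Fintype.sum_bool, hmarg, hmarg]
  simp

theorem norm_add_sq_le {F : Type*} [SeminormedAddCommGroup F] (a b : F) :
    ‖a + b‖ ^ 2 ≤ 2 * (‖a‖ ^ 2 + ‖b‖ ^ 2) :=
  (pow_le_pow_left₀ (norm_nonneg _) (norm_add_le a b) 2).trans add_sq_le

theorem oracleBlock_second_moment_le {F : Type*} [SeminormedAddCommGroup F] [NormedSpace ℝ F]
    {p0 q α τ : ℝ} (hp0 : p0 ∈ Set.Ioo 0 1) (hq : q ∈ Set.Ioo 0 1)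
    (hτ : τ = p0 / (p0 + 2 * (1 - p0) * q)) (a b g : F) :
    p0 * (q * ‖oracleBlock p0 q α τ a b g true true‖ ^ 2
        + (1 - q) * ‖oracleBlock p0 q α τ a b g true false‖ ^ 2)
      + (1 - p0) * (q * ‖oracleBlock p0 q α τ a b g false true‖ ^ 2
        + (1 - q) * ‖oracleBlock p0 q α τ a b g false false‖ ^ 2)
      ≤ 2 / p0 * ‖a‖ ^ 2 + 2 * (1 - α) ^ 2 / (p0 + 2 * (1 - p0) * q) * ‖b‖ ^ 2
        + 1 / (1 - p0) * (1 / (1 - q) * ‖g‖ ^ 2) := by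
  obtain ⟨hp0, hp1⟩ := hp0
  obtain ⟨hq0, hq1⟩ := hq
  have h1p0 : 0 < 1 - p0 := by linarith
  have h1q : 0 < 1 - q := by linarith
  have hD : 0 < p0 + 2 * (1 - p0) * q := by positivity
  simp only [oracleBlock, if_true, Bool.false_eq_true, if_false, norm_smul, mul_pow,
    Real.norm_eq_abs, sq_abs]
  calc _ = p0⁻¹ * ‖a + (τ * (1 - α)) • b‖ ^ 2
        + (1 - τ) ^ 2 * (1 - α) ^ 2 / ((1 - p0) * q) * ‖b‖ ^ 2
        + 1 / (1 - p0) * (1 / (1 - q) * ‖g‖ ^ 2) := by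
        field_simp
        ring
    _ ≤ p0⁻¹ * (2 * (‖a‖ ^ 2 + (τ * (1 - α)) ^ 2 * ‖b‖ ^ 2))
        + (1 - τ) ^ 2 * (1 - α) ^ 2 / ((1 - p0) * q) * ‖b‖ ^ 2
        + 1 / (1 - p0) * (1 / (1 - q) * ‖g‖ ^ 2) := by
        gcongr
        simpa only [norm_smul, mul_pow, Real.norm_eq_abs, sq_abs] using
          norm_add_sq_le a ((τ * (1 - α)) • b)
    _ = _ := by
        rw [hτ]
        field_simp
        ring

theorem sum_mul_norm_sq_eq_of_apply_ne {ι κ F : Type*} [Fintype ι] [Fintype κ]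
    [SeminormedAddCommGroup F] (c : ι → κ) (r : κ → ℝ) (G : κ → PiLp 2 fun _ : ι => F)
    (hG : ∀ j i, c i ≠ j → G j i = 0) :
    ∑ j, r j * ‖G j‖ ^ 2 = ∑ i, r (c i) * ‖G (c i) i‖ ^ 2 := by
  simp only [PiLp.norm_sq_eq_of_L2, mul_sum]
  rw [sum_comm]
  exact sum_congr rfl fun i _ =>
    sum_eq_single (c i) (fun j _ hj => by simp [hG j i (Ne.symm hj)]) (by simp)

theorem oracle_variance_bound_general {n k d : ℕ}
    (c : Fin n → Fin k)
    (γ : Fin n → ℝ)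
    (α : Fin k → ℝ)
    (f : Fin n → E d → ℝ) (hf : ∀ i, Differentiable ℝ (f i))
    (p0 : ℝ) (hp0 : p0 ∈ Set.Ioo (0 : ℝ) 1)
    (p : Fin k → ℝ) (hp : ∀ j, p j ∈ Set.Ioo (0 : ℝ) 1)
    (τ : Fin k → ℝ) (hτ : ∀ j, τ j = p0 / (p0 + 2 * (1 - p0) * p j)) :
    ∀ θ θhat : X n d,
      ∑ ω : Outcome k, wt p0 p ω *
          ‖Orc c γ α τ p0 p f θ ω - Orc c γ α τ p0 p f θhat ω‖ ^ 2
        ≤ (2 / p0) * ‖gradient (phi c γ α) θ - gradient (phi c γ α) θhat‖ ^ 2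
          + ∑ j, (2 * (1 - α j) ^ 2 / (p0 + 2 * (1 - p0) * p j)) *
              ‖gradient (psi c γ j) θ - gradient (psi c γ j) θhat‖ ^ 2
          + (1 / (1 - p0)) * ∑ j, (1 / (1 - p j)) *
              ‖gradient (clLoss c f j) θ - gradient (clLoss c f j) θhat‖ ^ 2 := by
  intro θ θhat
  set Δφ := gradient (phi c γ α) θ - gradient (phi c γ α) θhat
  set Δψ := fun j => gradient (psi c γ j) θ - gradient (psi c γ j) θhat with hΔψ
  set ΔF := fun j => gradient (clLoss c f j) θ - gradient (clLoss c f j) θhat with hΔF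
  set blk := fun i =>
    oracleBlock p0 (p (c i)) (α (c i)) (τ (c i)) (Δφ i) (Δψ (c i) i) (ΔF (c i) i)
  have hblock (ω : Outcome k) : ‖Orc c γ α τ p0 p f θ ω - Orc c γ α τ p0 p f θhat ω‖ ^ 2
      = ∑ i, ‖blk i ω.1 (ω.2 (c i))‖ ^ 2 := by
    simp only [PiLp.norm_sq_eq_of_L2, PiLp.sub_apply, Orc_apply c γ α τ p0 p hf, oracleBlock_sub,
      blk, Δφ, hΔψ, hΔF]
  have hψ (j i) (hij : c i ≠ j) : Δψ j i = 0 := by simp [hΔψ, gradient_psi, hij]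
  have hF (j i) (hij : c i ≠ j) : ΔF j i = 0 := by simp [hΔF, gradient_clLoss c hf, hij]
  calc _ = ∑ i, ∑ ω : Outcome k, wt p0 p ω * ‖blk i ω.1 (ω.2 (c i))‖ ^ 2 := by
        simp only [hblock, mul_sum]
        exact sum_comm
    _ ≤ ∑ i, (2 / p0 * ‖Δφ i‖ ^ 2
          + 2 * (1 - α (c i)) ^ 2 / (p0 + 2 * (1 - p0) * p (c i)) * ‖Δψ (c i) i‖ ^ 2
          + 1 / (1 - p0) * (1 / (1 - p (c i)) * ‖ΔF (c i) i‖ ^ 2)) :=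
        sum_le_sum fun i _ => by
          rw [sum_wt_mul p0 p (c i) fun ξ₀ ξ => ‖blk i ξ₀ ξ‖ ^ 2]
          exact oracleBlock_second_moment_le hp0 (hp _) (hτ _) _ _ _
    _ = _ := by
        rw [PiLp.norm_sq_eq_of_L2 _ Δφ, sum_mul_norm_sq_eq_of_apply_ne c _ Δψ hψ,
          sum_mul_norm_sq_eq_of_apply_ne c _ ΔF hF]
        simp only [mul_sum, sum_add_distrib]

/-- with the optimal mixing fractions τ_j = p_0/(p_0 + 2(1−p_0)p_j), the
expected squared distance between oracle evaluations is bounded by the stated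
combination of squared gradient differences of φ, ψ_j and F_j. -/
theorem oracle_variance_bound {n k d : ℕ}
    (c : Fin n → Fin k) (hc : ∀ j, (clSet c j).Nonempty)
    (γ : Fin n → ℝ) (hγ : ∀ i, 0 < γ i)
    (α : Fin k → ℝ) (hα : ∀ j, α j ∈ Set.Ioc (0 : ℝ) 1)
    (f : Fin n → E d → ℝ) (hf : ∀ i, Differentiable ℝ (f i))
    (p0 : ℝ) (hp0 : p0 ∈ Set.Ioo (0 : ℝ) 1)
    (p : Fin k → ℝ) (hp : ∀ j, p j ∈ Set.Ioo (0 : ℝ) 1)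
    (τ : Fin k → ℝ) (hτ : ∀ j, τ j = p0 / (p0 + 2 * (1 - p0) * p j)) :
    ∀ θ θhat : X n d,
      ∑ ω : Outcome k, wt p0 p ω *
          ‖Orc c γ α τ p0 p f θ ω - Orc c γ α τ p0 p f θhat ω‖ ^ 2
        ≤ (2 / p0) * ‖gradient (phi c γ α) θ - gradient (phi c γ α) θhat‖ ^ 2
          + ∑ j, (2 * (1 - α j) ^ 2 / (p0 + 2 * (1 - p0) * p j)) *
              ‖gradient (psi c γ j) θ - gradient (psi c γ j) θhat‖ ^ 2
          + (1 / (1 - p0)) * ∑ j, (1 / (1 - p j)) *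
              ‖gradient (clLoss c f j) θ - gradient (clLoss c f j) θhat‖ ^ 2 :=
  oracle_variance_bound_general c γ α f hf p0 hp0 p hp τ hτ
end
end

section
/- Suppose each f_i is μ-strongly convex and L-smooth, τ_j = p_0/(p_0 + 2(1−p_0)p_j) for each j, and let θ* be the unique minimizer of F. Define 𝓛 = max{ (2/p_0) max_{j} max_{i∈I_j} α_j γ_i , max_{j} [2(1−α_j) max_{i∈I_j} γ_i / (p_0 + 2(1−p_0)p_j)] , (L/(1−p_0)) max_{j} 1/(1−p_j) } and σ² = (2/p_0)‖∇φ(θ*)‖² + Σ_{j=1}^k [2(1−α_j)²/(p_0 + 2(1−p_0)p_j)]‖∇ψ_j(θ*)‖² + (1/(1−p_0)) Σ_{j=1}^k (1/(1−p_j))‖∇F_j(θ*)‖², where F_j(θ) = Σ_{i∈I_j} f_i(θ_i). Then for all θ ∈ (ℝ^d)^n, the expectation over (ξ_0,…,ξ_k) satisfies E‖G(θ)‖² ≤ 4𝓛 (F(θ) − F(θ*)) + 2σ². -/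
open scoped BigOperators

noncomputable section

/-- The full objective F(θ) = Σ_i f_i(θ_i) + Σ_j (1−α_j) ψ_j(θ) + φ(θ). -/
def objF {n k d : ℕ} (c : Fin n → Fin k) (γ : Fin n → ℝ) (α : Fin k → ℝ)
    (f : Fin n → E d → ℝ) (θ : X n d) : ℝ :=
  (∑ i, f i (θ i)) + (∑ j, (1 - α j) * psi c γ j θ) + phi c γ α θ

/-- The expected-smoothness constant 𝓛. -/
def esL {n k : ℕ} (hk : 0 < k) (c : Fin n → Fin k) (hc : ∀ j, (clSet c j).Nonempty)
    (γ : Fin n → ℝ) (α : Fin k → ℝ) (L p0 : ℝ) (p : Fin k → ℝ) : ℝ :=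
  max (max
    ((2 / p0) * Finset.univ.sup' (Finset.univ_nonempty_iff.mpr ⟨⟨0, hk⟩⟩)
      fun j => (clSet c j).sup' (hc j) fun i => α j * γ i)
    (Finset.univ.sup' (Finset.univ_nonempty_iff.mpr ⟨⟨0, hk⟩⟩)
      fun j => 2 * (1 - α j) * ((clSet c j).sup' (hc j) γ) / (p0 + 2 * (1 - p0) * p j)))
    ((L / (1 - p0)) * Finset.univ.sup' (Finset.univ_nonempty_iff.mpr ⟨⟨0, hk⟩⟩)
      fun j => 1 / (1 - p j))

/-- The oracle variance at the optimum,
σ² = (2/p_0)‖∇φ(θ*)‖² + Σ_j [2(1−α_j)²/(p_0+2(1−p_0)p_j)]‖∇ψ_j(θ*)‖²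
   + (1/(1−p_0)) Σ_j (1/(1−p_j))‖∇F_j(θ*)‖². -/
def sigmaSq {n k d : ℕ} (c : Fin n → Fin k) (γ : Fin n → ℝ) (α : Fin k → ℝ)
    (f : Fin n → E d → ℝ) (p0 : ℝ) (p : Fin k → ℝ) (θstar : X n d) : ℝ :=
  (2 / p0) * ‖gradient (phi c γ α) θstar‖ ^ 2
    + ∑ j, (2 * (1 - α j) ^ 2 / (p0 + 2 * (1 - p0) * p j)) *
        ‖gradient (psi c γ j) θstar‖ ^ 2
    + (1 / (1 - p0)) * ∑ j, (1 / (1 - p j)) * ‖gradient (clLoss c f j) θstar‖ ^ 2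

/-!
For a client `i` in cluster `j` the three branches of the oracle carry probabilities `p₀`,
`(1 - p₀) pⱼ` and `(1 - p₀)(1 - pⱼ)`. Splitting the `ξ₀ = 1` branch with
`‖a + b‖² ≤ 2‖a‖² + 2‖b‖²`, the choice of `τⱼ` makes the two `θᵢ - θ̄ⱼ` contributions add up to
exactly `2(1 - αⱼ)² / (p₀ + 2(1 - p₀)pⱼ) · ‖γᵢ(θᵢ - θ̄ⱼ)‖²`, so `E‖G(θ)‖²` is bounded by a weighted
sum of `‖∇φ(θ)‖²`, `‖∇ψⱼ(θ)‖²` and `‖∇f_i(θᵢ)‖²`. Co-coercivity of the convex `L`-smooth `f_i`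
gives `‖∇f_i(x)‖² ≤ 4L D(x, x*) + 2‖∇f_i(x*)‖²`, `D` the Bregman divergence; the quadratics `φ`,
`ψⱼ` obey the same bound with Bregman divergence `h(θ - θ*)` and `L` replaced by their largest
weight. As `∇F(θ*) = 0`, the divergences add up to `F(θ) - F(θ*)`, and each weighted constant is
at most `𝓛`.
-/

open InnerProductSpace Set

lemma norm_add_sq_le_two_mul {V : Type*} [SeminormedAddCommGroup V] (a b : V) :
    ‖a + b‖ ^ 2 ≤ 2 * ‖a‖ ^ 2 + 2 * ‖b‖ ^ 2 := by
  nlinarith [norm_add_le a b, norm_nonneg (a + b), add_sq_le (a := ‖a‖) (b := ‖b‖)]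

lemma mul_le_four_mul_add_two_mul {κ M ℒ D x y : ℝ} (hκ : 0 ≤ κ) (hD : 0 ≤ D) (hM : κ * M ≤ ℒ)
    (h : x ≤ 4 * M * D + 2 * y) : κ * x ≤ 4 * ℒ * D + 2 * (κ * y) := by
  nlinarith [mul_le_mul_of_nonneg_left h hκ, mul_le_mul_of_nonneg_right hM hD]

section SmoothConvex

variable {H : Type*} [NormedAddCommGroup H] [InnerProductSpace ℝ H] [CompleteSpace H]

lemma HasGradientAt.hasDerivAt_comp_add_smul {f : H → ℝ} {g y v : H} {t : ℝ}
    (hf : HasGradientAt f g (y + t • v)) :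
    HasDerivAt (fun s : ℝ => f (y + s • v)) (inner ℝ g v) t := by
  have hline : HasDerivAt (fun s : ℝ => y + s • v) v t := by
    simpa using ((hasDerivAt_id t).smul_const v).const_add y
  simpa [Function.comp_def, toDual_apply_apply] using
    (hasGradientAt_iff_hasFDerivAt.1 hf).comp_hasDerivAt t hline

lemma ConvexOn.add_inner_le_of_hasGradientAt {f : H → ℝ} {g y : H}
    (hf : ConvexOn ℝ univ f) (hg : HasGradientAt f g y) (x : H) :
    f y + inner ℝ g (x - y) ≤ f x := by
  have hconv : ConvexOn ℝ univ fun t : ℝ => f (y + t • (x - y)) := by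
    simpa [Function.comp_def, AffineMap.lineMap_apply, add_comm] using
      hf.comp_affineMap (AffineMap.lineMap y x : ℝ →ᵃ[ℝ] H)
  have hslope := hconv.le_slope_of_hasDerivAt (mem_univ 0) (mem_univ 1) one_pos
    (HasGradientAt.hasDerivAt_comp_add_smul (by simpa using hg))
  simp only [slope_def_field] at hslope
  norm_num at hslope
  linarith

lemma le_add_inner_add_of_lipschitz_gradient {f : H → ℝ} {g : H → H}
    (hg : ∀ x, HasGradientAt f (g x) x) {L : ℝ} (hlip : ∀ x y, ‖g x - g y‖ ≤ L * ‖x - y‖)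
    (x y : H) : f x ≤ f y + inner ℝ (g y) (x - y) + L / 2 * ‖x - y‖ ^ 2 := by
  set v := x - y
  set φ : ℝ → ℝ := fun t => f (y + t • v) - t * inner ℝ (g y) v - L / 2 * t ^ 2 * ‖v‖ ^ 2
  have hφ : ∀ t, HasDerivAt φ
      (inner ℝ (g (y + t • v)) v - inner ℝ (g y) v - L * t * ‖v‖ ^ 2) t := by
    intro t
    have := (((hg (y + t • v)).hasDerivAt_comp_add_smul).sub
      ((hasDerivAt_id t).mul_const (inner ℝ (g y) v))).sub
      (((hasDerivAt_pow 2 t).const_mul (L / 2)).mul_const (‖v‖ ^ 2))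
    exact this.congr_deriv (by simp only [Nat.cast_ofNat, Nat.reduceSub, pow_one]; ring)
  have hanti : AntitoneOn φ (Ici 0) := by
    refine antitoneOn_of_hasDerivWithinAt_nonpos (convex_Ici 0)
      (HasDerivAt.continuousOn fun t _ => hφ t) (fun t _ => (hφ t).hasDerivWithinAt) ?_
    intro t ht
    rw [interior_Ici, mem_Ioi] at ht
    have hstep : ‖g (y + t • v) - g y‖ ≤ L * (t * ‖v‖) := by
      simpa [norm_smul, abs_of_pos ht] using hlip (y + t • v) y
    calc inner ℝ (g (y + t • v)) v - inner ℝ (g y) v - L * t * ‖v‖ ^ 2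
        = inner ℝ (g (y + t • v) - g y) v - L * t * ‖v‖ ^ 2 := by rw [inner_sub_left]
      _ ≤ ‖g (y + t • v) - g y‖ * ‖v‖ - L * t * ‖v‖ ^ 2 := by
          gcongr; exact real_inner_le_norm _ _
      _ ≤ L * (t * ‖v‖) * ‖v‖ - L * t * ‖v‖ ^ 2 := by gcongr
      _ = 0 := by ring
  have h01 := hanti (mem_Ici.2 le_rfl) (mem_Ici.2 zero_le_one) zero_le_one
  simp only [φ, v] at h01
  norm_num at h01
  linarith

lemma ConvexOn.norm_sub_sq_le_of_lipschitz_gradient {f : H → ℝ} {g : H → H}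
    (hf : ConvexOn ℝ univ f) (hg : ∀ x, HasGradientAt f (g x) x) {L : ℝ} (hL : 0 < L)
    (hlip : ∀ x y, ‖g x - g y‖ ≤ L * ‖x - y‖) (x y : H) :
    ‖g x - g y‖ ^ 2 ≤ 2 * L * (f x - f y - inner ℝ (g y) (x - y)) := by
  -- `h` is `f` tilted so that `y` minimises it; the gradient step of length `1 / L` from `x`
  -- decreases `h` by at least `‖∇h x‖² / 2L`.
  set h : H → ℝ := fun z => f z - inner ℝ (g y) z
  have hgh : ∀ z, HasGradientAt h (g z - g y) z := by
    intro z
    rw [hasGradientAt_iff_hasFDerivAt, map_sub]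
    exact (hasGradientAt_iff_hasFDerivAt.1 (hg z)).sub (toDual ℝ H (g y)).hasFDerivAt
  have hh : ConvexOn ℝ univ h := hf.sub ((innerₛₗ ℝ (g y)).concaveOn convex_univ)
  have hmin : h y ≤ h (x - L⁻¹ • (g x - g y)) := by
    simpa using hh.add_inner_le_of_hasGradientAt (hgh y) (x - L⁻¹ • (g x - g y))
  have hdesc := le_add_inner_add_of_lipschitz_gradient hgh (L := L)
    (fun a b => by simpa using hlip a b) (x - L⁻¹ • (g x - g y)) x
  rw [sub_sub_cancel_left, inner_neg_right, norm_neg, inner_smul_right, norm_smul,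
    real_inner_self_eq_norm_sq, Real.norm_eq_abs, abs_inv, abs_of_pos hL] at hdesc
  have hgap : h x - h y = f x - f y - inner ℝ (g y) (x - y) := by
    simp only [h, inner_sub_right]; ring
  have hstep : ‖g x - g y‖ ^ 2 / (2 * L) ≤ h x - h y := by
    have : L⁻¹ * ‖g x - g y‖ ^ 2 - L / 2 * (L⁻¹ * ‖g x - g y‖) ^ 2
        = ‖g x - g y‖ ^ 2 / (2 * L) := by
      field_simp; ring
    linarith
  rw [div_le_iff₀ (by positivity), hgap] at hstep
  linarith

lemma ConvexOn.norm_sq_le_of_lipschitz_gradient {f : H → ℝ} {g : H → H}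
    (hf : ConvexOn ℝ univ f) (hg : ∀ x, HasGradientAt f (g x) x) {L : ℝ} (hL : 0 < L)
    (hlip : ∀ x y, ‖g x - g y‖ ≤ L * ‖x - y‖) (x y : H) :
    ‖g x‖ ^ 2 ≤ 4 * L * (f x - f y - inner ℝ (g y) (x - y)) + 2 * ‖g y‖ ^ 2 := by
  have := norm_add_sq_le_two_mul (g x - g y) (g y)
  rw [sub_add_cancel] at this
  linarith [hf.norm_sub_sq_le_of_lipschitz_gradient hg hL hlip x y]

end SmoothConvex

section PiIndicator

variable {ι H : Type*} [Fintype ι] [DecidableEq ι] [NormedAddCommGroup H] (S : Finset ι)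

def piIndicator (z : ι → H) : PiLp 2 (fun _ : ι => H) :=
  WithLp.toLp 2 fun i => if i ∈ S then z i else 0

lemma norm_piIndicator_sq (z : ι → H) : ‖piIndicator S z‖ ^ 2 = ∑ i ∈ S, ‖z i‖ ^ 2 := by
  simp [piIndicator, PiLp.norm_sq_eq_of_L2, apply_ite, Finset.sum_ite_mem]

variable [InnerProductSpace ℝ H]

lemma inner_piIndicator (z : ι → H) (v : PiLp 2 (fun _ : ι => H)) :
    inner ℝ (piIndicator S z) v = ∑ i ∈ S, inner ℝ (z i) (v i) := by
  have hite : ∀ i, inner ℝ (if i ∈ S then z i else 0) (v i)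
      = if i ∈ S then inner ℝ (z i) (v i) else 0 := fun i => by split_ifs <;> simp
  simp [piIndicator, PiLp.inner_apply, hite, Finset.sum_ite_mem]

lemma hasGradientAt_sum_apply_s9 [CompleteSpace H] {f : ι → H → ℝ} {g : ι → H}
    {θ : PiLp 2 (fun _ : ι => H)} (hf : ∀ i ∈ S, HasGradientAt (f i) (g i) (θ i)) :
    HasGradientAt (fun θ' : PiLp 2 (fun _ : ι => H) => ∑ i ∈ S, f i (θ' i))
      (piIndicator S g) θ := by
  rw [hasGradientAt_iff_hasFDerivAt]
  have hsum := HasFDerivAt.fun_sum (u := S) fun i hi =>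
    (hasGradientAt_iff_hasFDerivAt.1 (hf i hi)).comp θ
      (PiLp.proj (𝕜 := ℝ) 2 (fun _ : ι => H) i).hasFDerivAt
  refine hsum.congr_fderiv (ContinuousLinearMap.ext fun v => ?_)
  simp [inner_piIndicator, toDual_apply_apply]

end PiIndicator

section WeightedDispersion

open Filter Topology

variable {ι H : Type*} [NormedAddCommGroup H] [InnerProductSpace ℝ H] {S : Finset ι} {u : ι → ℝ}

local notation "𝕏" => PiLp 2 (fun _ : ι => H)

variable (S u) in
def wMean (θ : 𝕏) : H := (∑ i ∈ S, u i)⁻¹ • ∑ i ∈ S, u i • θ i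

variable (S u) in
def dispersion (θ : 𝕏) : ℝ := 1 / 2 * ∑ i ∈ S, u i * ‖θ i - wMean S u θ‖ ^ 2

lemma wMean_add (θ θ' : 𝕏) : wMean S u (θ + θ') = wMean S u θ + wMean S u θ' := by
  simp [wMean, smul_add, Finset.sum_add_distrib]

lemma wMean_sub (θ θ' : 𝕏) : wMean S u (θ - θ') = wMean S u θ - wMean S u θ' := by
  simp [wMean, smul_sub, Finset.sum_sub_distrib]

lemma sum_smul_sub_wMean (hU : ∑ i ∈ S, u i ≠ 0) (θ : 𝕏) :
    ∑ i ∈ S, u i • (θ i - wMean S u θ) = 0 := by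
  simp [smul_sub, Finset.sum_sub_distrib, ← Finset.sum_smul, wMean, smul_inv_smul₀ hU]

lemma dispersion_nonneg (hu : ∀ i ∈ S, 0 ≤ u i) (θ : 𝕏) : 0 ≤ dispersion S u θ :=
  mul_nonneg (by norm_num) (Finset.sum_nonneg fun i hi => mul_nonneg (hu i hi) (sq_nonneg _))

variable [DecidableEq ι]

variable (S u) in
def dispersionGrad (θ : 𝕏) : 𝕏 := piIndicator S fun i => u i • (θ i - wMean S u θ)

lemma dispersionGrad_sub (θ θ' : 𝕏) :
    dispersionGrad S u (θ - θ') = dispersionGrad S u θ - dispersionGrad S u θ' := by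
  ext i : 1
  by_cases hi : i ∈ S
  · simp only [dispersionGrad, piIndicator, hi, if_true, wMean_sub, PiLp.sub_apply]
    module
  · simp [dispersionGrad, piIndicator, hi]

lemma dispersionGrad_zero : dispersionGrad S u (0 : 𝕏) = 0 := by
  simpa using dispersionGrad_sub (S := S) (u := u) (0 : 𝕏) 0

lemma continuous_dispersionGrad : Continuous (dispersionGrad (H := H) S u) := by
  refine (PiLp.continuous_toLp 2 _).comp (continuous_pi fun i => ?_)
  unfold wMean
  split_ifs <;> fun_prop

variable [Fintype ι]

lemma inner_dispersionGrad (hU : ∑ i ∈ S, u i ≠ 0) (θ v : 𝕏) :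
    inner ℝ (dispersionGrad S u θ) v
      = ∑ i ∈ S, u i * inner ℝ (θ i - wMean S u θ) (v i - wMean S u v) := by
  have hcentre : ∑ i ∈ S, inner ℝ (u i • (θ i - wMean S u θ)) (wMean S u v) = 0 := by
    rw [← sum_inner, sum_smul_sub_wMean hU, inner_zero_left]
  have hsplit : ∑ i ∈ S, u i * inner ℝ (θ i - wMean S u θ) (v i - wMean S u v)
      = ∑ i ∈ S, inner ℝ (u i • (θ i - wMean S u θ)) (v i)
        - ∑ i ∈ S, inner ℝ (u i • (θ i - wMean S u θ)) (wMean S u v) := by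
    simp only [inner_sub_right, mul_sub, real_inner_smul_left, Finset.sum_sub_distrib]
  rw [hsplit, hcentre, sub_zero, dispersionGrad, inner_piIndicator]

lemma dispersion_eq_inner (hU : ∑ i ∈ S, u i ≠ 0) (θ : 𝕏) :
    dispersion S u θ = 1 / 2 * inner ℝ (dispersionGrad S u θ) θ := by
  simp [dispersion, inner_dispersionGrad hU]

lemma dispersion_add (hU : ∑ i ∈ S, u i ≠ 0) (θ Δ : 𝕏) :
    dispersion S u (θ + Δ)
      = dispersion S u θ + inner ℝ (dispersionGrad S u θ) Δ + dispersion S u Δ := by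
  have hsplit : ∀ i, (θ + Δ) i - wMean S u (θ + Δ)
      = (θ i - wMean S u θ) + (Δ i - wMean S u Δ) := by
    intro i; rw [wMean_add, PiLp.add_apply]; abel
  simp only [dispersion, inner_dispersionGrad hU, hsplit, norm_add_sq_real, mul_add,
    Finset.sum_add_distrib, Finset.mul_sum]
  ring_nf

lemma hasGradientAt_dispersion [CompleteSpace H] (hU : ∑ i ∈ S, u i ≠ 0) (θ : 𝕏) :
    HasGradientAt (dispersion S u) (dispersionGrad S u θ) θ := by
  rw [hasGradientAt_iff_isLittleO_nhds_zero]
  have hrem : (fun h => dispersion S u (θ + h) - dispersion S u θ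
      - inner ℝ (dispersionGrad S u θ) h)
      = fun h => 1 / 2 * inner ℝ (dispersionGrad S u h) h := by
    funext h
    rw [dispersion_add hU, dispersion_eq_inner hU h]
    ring
  -- the remainder is `o(h)` because `dispersionGrad S u` is continuous and vanishes at `0`
  have hG : Tendsto (fun h => ‖dispersionGrad S u h‖) (𝓝 (0 : 𝕏)) (𝓝 0) := by
    have := (continuous_dispersionGrad (S := S) (u := u) (H := H)).tendsto 0
    simpa [dispersionGrad_zero] using this.norm
  have hbound : (fun h => 1 / 2 * inner ℝ (dispersionGrad S u h) h)
      =O[𝓝 (0 : 𝕏)] fun h => ‖dispersionGrad S u h‖ * ‖h‖ := by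
    refine Asymptotics.IsBigO.of_bound (1 / 2) (Eventually.of_forall fun h => ?_)
    rw [norm_mul, norm_mul, norm_norm, norm_norm, Real.norm_of_nonneg (by norm_num)]
    exact mul_le_mul_of_nonneg_left (norm_inner_le_norm _ _) (by norm_num)
  have hsmall : (fun h : 𝕏 => ‖dispersionGrad S u h‖ * ‖h‖) =o[𝓝 0] fun h => h := by
    refine Asymptotics.isLittleO_norm_right.1 ?_
    simpa using ((Asymptotics.isLittleO_one_iff ℝ).2 hG).mul_isBigO
      (Asymptotics.isBigO_refl (fun h : 𝕏 => ‖h‖) (𝓝 0))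
  rw [hrem]
  exact hbound.trans_isLittleO hsmall

lemma norm_dispersionGrad_sq_le {M : ℝ} (hu : ∀ i ∈ S, 0 ≤ u i) (hM : ∀ i ∈ S, u i ≤ M)
    (θ : 𝕏) : ‖dispersionGrad S u θ‖ ^ 2 ≤ 2 * M * dispersion S u θ := by
  rw [dispersionGrad, norm_piIndicator_sq, dispersion, ← mul_assoc, Finset.mul_sum]
  refine Finset.sum_le_sum fun i hi => ?_
  rw [norm_smul, mul_pow, Real.norm_eq_abs, sq_abs]
  have := mul_le_mul_of_nonneg_right (hM i hi)
    (mul_nonneg (hu i hi) (sq_nonneg ‖θ i - wMean S u θ‖))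
  linarith

lemma norm_dispersionGrad_sq_le_add {M : ℝ} (hu : ∀ i ∈ S, 0 ≤ u i) (hM : ∀ i ∈ S, u i ≤ M)
    (θ θ' : 𝕏) :
    ‖dispersionGrad S u θ‖ ^ 2
      ≤ 4 * M * dispersion S u (θ - θ') + 2 * ‖dispersionGrad S u θ'‖ ^ 2 := by
  have := norm_add_sq_le_two_mul (dispersionGrad S u θ - dispersionGrad S u θ')
    (dispersionGrad S u θ')
  rw [sub_add_cancel, ← dispersionGrad_sub] at this
  linarith [norm_dispersionGrad_sq_le hu hM (θ - θ')]

end WeightedDispersion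

lemma sum_prod_bernoulli_mul {ι : Type*} [Fintype ι] [DecidableEq ι] (p : ι → ℝ) (j : ι)
    (t : Bool → ℝ) :
    ∑ b : ι → Bool, (∏ l, if b l then p l else 1 - p l) * t (b j)
      = p j * t true + (1 - p j) * t false := by
  have hfactor : ∀ b : ι → Bool, (∏ l, if b l then p l else 1 - p l) * t (b j)
      = ∏ l, (if b l then p l else 1 - p l) * (if l = j then t (b l) else 1) := by
    intro b
    rw [Finset.prod_mul_distrib, Finset.prod_ite_eq' Finset.univ j, if_pos (Finset.mem_univ j)]
  rw [Finset.sum_congr rfl fun b _ => hfactor b, ← Fintype.prod_sum (f := fun l (c : Bool) =>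
    (if c then p l else 1 - p l) * (if l = j then t c else 1)),
    Finset.prod_eq_single j (fun l _ hl => by simp [hl]) (by simp)]
  simp

lemma sum_wt_mul_ite {k : ℕ} (p0 : ℝ) (p : Fin k → ℝ) (j : Fin k) (A B C : ℝ) :
    ∑ ω : Outcome k, wt p0 p ω * (if ω.1 then A else if ω.2 j then B else C)
      = p0 * A + (1 - p0) * (p j * B + (1 - p j) * C) := by
  have hA := sum_prod_bernoulli_mul p j fun _ => A
  have hBC := sum_prod_bernoulli_mul p j fun b => if b then B else C
  simp only [Fintype.sum_prod_type, Fintype.sum_bool, wt, if_true, Bool.false_eq_true, if_false,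
    mul_assoc, ← Finset.mul_sum, hA, hBC]
  ring

lemma sum_wt_mul_norm_sq_ite {ι V : Type*} [Fintype ι] [NormedAddCommGroup V] {k : ℕ}
    (p0 : ℝ) (p : Fin k → ℝ) (σ : ι → Fin k) (T M B : ι → V) :
    ∑ ω : Outcome k, wt p0 p ω * ‖(WithLp.toLp 2 fun i =>
        if ω.1 then T i else if ω.2 (σ i) then M i else B i : PiLp 2 fun _ : ι => V)‖ ^ 2
      = ∑ i, (p0 * ‖T i‖ ^ 2
          + (1 - p0) * (p (σ i) * ‖M i‖ ^ 2 + (1 - p (σ i)) * ‖B i‖ ^ 2)) := by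
  simp only [PiLp.norm_sq_eq_of_L2, Finset.mul_sum]
  rw [Finset.sum_comm]
  refine Finset.sum_congr rfl fun i _ => ?_
  simp only [apply_ite (‖·‖ ^ 2)]
  exact sum_wt_mul_ite p0 p (σ i) _ _ _

lemma client_second_moment_le {V : Type*} [NormedAddCommGroup V] [NormedSpace ℝ V]
    {p0 q τ γ α : ℝ} (hp0 : p0 ∈ Ioo 0 1) (hq : q ∈ Ioo 0 1)
    (hτ : τ = p0 / (p0 + 2 * (1 - p0) * q)) (a b g : V) :
    p0 * ‖(γ * α / p0) • a + (γ * τ * (1 - α) / p0) • b‖ ^ 2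
      + (1 - p0) * (q * ‖(γ * (1 - τ) * (1 - α) / ((1 - p0) * q)) • b‖ ^ 2
        + (1 - q) * ‖(1 / ((1 - p0) * (1 - q))) • g‖ ^ 2)
    ≤ 2 / p0 * ‖(α * γ) • a‖ ^ 2 + 2 * (1 - α) ^ 2 / (p0 + 2 * (1 - p0) * q) * ‖γ • b‖ ^ 2
      + 1 / ((1 - p0) * (1 - q)) * ‖g‖ ^ 2 := by
  obtain ⟨hp0, hp1⟩ := hp0
  obtain ⟨hq0, hq1⟩ := hq
  have hD : 0 < p0 + 2 * (1 - p0) * q := by nlinarith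
  have hp1' : 1 - p0 ≠ 0 := by linarith
  have hq1' : 1 - q ≠ 0 := by linarith
  calc _ ≤ p0 * (2 * ‖(γ * α / p0) • a‖ ^ 2 + 2 * ‖(γ * τ * (1 - α) / p0) • b‖ ^ 2)
        + (1 - p0) * (q * ‖(γ * (1 - τ) * (1 - α) / ((1 - p0) * q)) • b‖ ^ 2
          + (1 - q) * ‖(1 / ((1 - p0) * (1 - q))) • g‖ ^ 2) := by
        gcongr
        exact norm_add_sq_le_two_mul _ _
    _ = _ := by
        -- with `D = p₀ + 2(1 - p₀)q` and `τ = p₀ / D`: `2τ² / p₀ + (1 - τ)² / ((1 - p₀)q) = 2 / D`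
        simp only [norm_smul, mul_pow, Real.norm_eq_abs, sq_abs, hτ]
        field_simp
        ring

section AsyncL2GD

open Filter

variable {n k d : ℕ} {c : Fin n → Fin k} {γ : Fin n → ℝ} {α : Fin k → ℝ} {p0 L : ℝ}
  {p : Fin k → ℝ}

lemma sum_clSet_eq {M : Type*} [AddCommMonoid M] (c : Fin n → Fin k) (g : Fin k → Fin n → M) :
    ∑ j, ∑ i ∈ clSet c j, g j i = ∑ i, g (c i) i := by
  rw [← Finset.sum_fiberwise Finset.univ c fun i => g (c i) i]
  refine Finset.sum_congr rfl fun j _ => Finset.sum_congr rfl fun i hi => ?_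
  rw [(Finset.mem_filter.1 hi).2]

lemma mem_clSet_self (c : Fin n → Fin k) (i : Fin n) : i ∈ clSet c (c i) := by
  simp [clSet]

variable (c γ α) in
def globalWeight (i : Fin n) : ℝ := α (c i) * γ i

lemma globalWeight_sum_ne_zero (hk : 0 < k) (hc : ∀ j, (clSet c j).Nonempty)
    (hγ : ∀ i, 0 < γ i) (hα : ∀ j, 0 < α j) : ∑ i, globalWeight c γ α i ≠ 0 := by
  obtain ⟨i, -⟩ := hc ⟨0, hk⟩
  exact (Finset.sum_pos (fun i _ => mul_pos (hα (c i)) (hγ i)) ⟨i, Finset.mem_univ i⟩).ne'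

lemma glAvg_eq_wMean (θ : X n d) :
    glAvg c γ α θ = wMean Finset.univ (globalWeight c γ α) θ := by
  simp only [glAvg, wMean, sum_clSet_eq c (fun j i => α j * γ i),
    sum_clSet_eq c fun j i => (α j * γ i) • θ i, globalWeight]

lemma clAvg_eq_wMean (j : Fin k) (θ : X n d) : clAvg c γ j θ = wMean (clSet c j) γ θ := rfl

lemma phi_eq_dispersion : phi (d := d) c γ α = dispersion Finset.univ (globalWeight c γ α) := by
  funext θ
  simp only [phi, dispersion, glAvg_eq_wMean, globalWeight, mul_assoc, Finset.mul_sum]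
  exact sum_clSet_eq c fun j i =>
    1 / 2 * (α j * (γ i * ‖θ i - wMean Finset.univ (globalWeight c γ α) θ‖ ^ 2))

lemma psi_eq_dispersion (j : Fin k) : psi (d := d) c γ j = dispersion (clSet c j) γ := rfl

lemma objF_sub_objF_eq {f : Fin n → E d → ℝ} (hdiff : ∀ i, Differentiable ℝ (f i))
    (hw₀ : ∑ i, globalWeight c γ α i ≠ 0) (hγ₀ : ∀ j, ∑ i ∈ clSet c j, γ i ≠ 0)
    {θstar : X n d} (hmin : ∀ θ, objF c γ α f θstar ≤ objF c γ α f θ) (θ : X n d) :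
    objF c γ α f θ - objF c γ α f θstar
      = ∑ i, (f i (θ i) - f i (θstar i) - inner ℝ (gradient (f i) (θstar i)) (θ i - θstar i))
        + ∑ j, (1 - α j) * dispersion (clSet c j) γ (θ - θstar)
        + dispersion Finset.univ (globalWeight c γ α) (θ - θstar) := by
  have hfoc : ∑ i, inner ℝ (gradient (f i) (θstar i)) (θ i - θstar i)
      + ∑ j, (1 - α j) * inner ℝ (dispersionGrad (clSet c j) γ θstar) (θ - θstar)
      + inner ℝ (dispersionGrad Finset.univ (globalWeight c γ α) θstar) (θ - θstar) = 0 := by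
    have hf : ∀ i, HasDerivAt (fun s : ℝ => f i (θstar i + s • (θ i - θstar i)))
        (inner ℝ (gradient (f i) (θstar i)) (θ i - θstar i)) 0 := fun i =>
      HasGradientAt.hasDerivAt_comp_add_smul (by simpa using (hdiff i (θstar i)).hasGradientAt)
    have hψ : ∀ j, HasDerivAt (fun s : ℝ => psi c γ j (θstar + s • (θ - θstar)))
        (inner ℝ (dispersionGrad (clSet c j) γ θstar) (θ - θstar)) 0 := fun j =>
      HasGradientAt.hasDerivAt_comp_add_smul
        (by simpa [psi_eq_dispersion] using hasGradientAt_dispersion (hγ₀ j) θstar)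
    have hφ : HasDerivAt (fun s : ℝ => phi c γ α (θstar + s • (θ - θstar)))
        (inner ℝ (dispersionGrad Finset.univ (globalWeight c γ α) θstar) (θ - θstar)) 0 :=
      HasGradientAt.hasDerivAt_comp_add_smul
        (by simpa [phi_eq_dispersion] using hasGradientAt_dispersion hw₀ θstar)
    refine IsLocalMin.hasDerivAt_eq_zero ?_ (((HasDerivAt.fun_sum fun i _ => hf i).add
      (HasDerivAt.fun_sum fun j _ => (hψ j).const_mul (1 - α j))).add hφ)
    exact Eventually.of_forall fun s => by simpa [objF] using hmin (θstar + s • (θ - θstar))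
  have hψ : ∀ j, psi c γ j θ = psi c γ j θstar
      + inner ℝ (dispersionGrad (clSet c j) γ θstar) (θ - θstar)
      + dispersion (clSet c j) γ (θ - θstar) := by
    intro j
    rw [psi_eq_dispersion, ← dispersion_add (hγ₀ j), add_sub_cancel]
  have hφ : phi c γ α θ = phi c γ α θstar
      + inner ℝ (dispersionGrad Finset.univ (globalWeight c γ α) θstar) (θ - θstar)
      + dispersion Finset.univ (globalWeight c γ α) (θ - θstar) := by
    rw [phi_eq_dispersion, ← dispersion_add hw₀, add_sub_cancel]
  simp only [objF, hψ, hφ, Finset.sum_sub_distrib, mul_add, Finset.sum_add_distrib]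
  linear_combination hfoc

lemma sigmaSq_eq {f : Fin n → E d → ℝ} (hdiff : ∀ i, Differentiable ℝ (f i))
    (hw₀ : ∑ i, globalWeight c γ α i ≠ 0) (hγ₀ : ∀ j, ∑ i ∈ clSet c j, γ i ≠ 0)
    (θstar : X n d) :
    sigmaSq c γ α f p0 p θstar
      = 2 / p0 * ‖dispersionGrad Finset.univ (globalWeight c γ α) θstar‖ ^ 2
        + ∑ j, 2 * (1 - α j) ^ 2 / (p0 + 2 * (1 - p0) * p j)
            * ‖dispersionGrad (clSet c j) γ θstar‖ ^ 2
        + ∑ j, 1 / ((1 - p0) * (1 - p j))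
            * ‖piIndicator (clSet c j) fun i => gradient (f i) (θstar i)‖ ^ 2 := by
  have hφ : gradient (phi c γ α) θstar
      = dispersionGrad Finset.univ (globalWeight c γ α) θstar := by
    rw [phi_eq_dispersion]
    exact (hasGradientAt_dispersion hw₀ θstar).gradient
  have hψ : ∀ j, gradient (psi c γ j) θstar = dispersionGrad (clSet c j) γ θstar :=
    fun j => (hasGradientAt_dispersion (hγ₀ j) θstar).gradient
  have hF : ∀ j, gradient (clLoss c f j) θstar
      = piIndicator (clSet c j) fun i => gradient (f i) (θstar i) :=
    fun j => (hasGradientAt_sum_apply_s9 _ fun i _ => (hdiff i (θstar i)).hasGradientAt).gradient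
  simp only [sigmaSq, hφ, hψ, hF, Finset.mul_sum]
  congr 1
  exact Finset.sum_congr rfl fun j _ => by rw [← mul_assoc, one_div_mul_one_div]

lemma expected_sq_norm_Orc_le {τ : Fin k → ℝ} {f : Fin n → E d → ℝ}
    (hp0 : p0 ∈ Ioo 0 1) (hp : ∀ j, p j ∈ Ioo 0 1)
    (hτ : ∀ j, τ j = p0 / (p0 + 2 * (1 - p0) * p j)) (θ : X n d) :
    ∑ ω, wt p0 p ω * ‖Orc c γ α τ p0 p f θ ω‖ ^ 2
      ≤ 2 / p0 * ‖dispersionGrad Finset.univ (globalWeight c γ α) θ‖ ^ 2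
        + ∑ j, 2 * (1 - α j) ^ 2 / (p0 + 2 * (1 - p0) * p j)
            * ‖dispersionGrad (clSet c j) γ θ‖ ^ 2
        + ∑ j, 1 / ((1 - p0) * (1 - p j))
            * ‖piIndicator (clSet c j) fun i => gradient (f i) (θ i)‖ ^ 2 := by
  unfold Orc
  rw [sum_wt_mul_norm_sq_ite]
  refine (Finset.sum_le_sum fun i _ =>
    client_second_moment_le hp0 (hp (c i)) (hτ (c i)) _ _ _).trans_eq ?_
  simp only [dispersionGrad, norm_piIndicator_sq, Finset.mul_sum, Finset.sum_add_distrib,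
    glAvg_eq_wMean, clAvg_eq_wMean, globalWeight]
  rw [sum_clSet_eq, sum_clSet_eq]

lemma phi_term_le (hk : 0 < k) (hc : ∀ j, (clSet c j).Nonempty) (hγ : ∀ i, 0 < γ i)
    (hα : ∀ j, 0 < α j) (hp0 : 0 < p0) (θ θstar : X n d) :
    2 / p0 * ‖dispersionGrad Finset.univ (globalWeight c γ α) θ‖ ^ 2
      ≤ 4 * esL hk c hc γ α L p0 p * dispersion Finset.univ (globalWeight c γ α) (θ - θstar)
        + 2 * (2 / p0 * ‖dispersionGrad Finset.univ (globalWeight c γ α) θstar‖ ^ 2) := by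
  have hw : ∀ i ∈ Finset.univ, 0 ≤ globalWeight c γ α i :=
    fun i _ => (mul_pos (hα (c i)) (hγ i)).le
  have hwM : ∀ i ∈ Finset.univ, globalWeight c γ α i
      ≤ Finset.univ.sup' (Finset.univ_nonempty_iff.mpr ⟨⟨0, hk⟩⟩)
          fun j => (clSet c j).sup' (hc j) fun i => α j * γ i := fun i _ =>
    calc globalWeight c γ α i ≤ (clSet c (c i)).sup' (hc (c i)) fun i' => α (c i) * γ i' :=
          Finset.le_sup' (fun i' => α (c i) * γ i') (mem_clSet_self c i)
      _ ≤ _ := Finset.le_sup' (fun j => (clSet c j).sup' (hc j) fun i => α j * γ i)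
          (Finset.mem_univ (c i))
  exact mul_le_four_mul_add_two_mul (by positivity) (dispersion_nonneg hw _)
    (le_max_of_le_left (le_max_left _ _)) (norm_dispersionGrad_sq_le_add hw hwM θ θstar)

lemma psi_term_le (hk : 0 < k) (hc : ∀ j, (clSet c j).Nonempty) (hγ : ∀ i, 0 < γ i)
    {j : Fin k} (hα : α j ≤ 1) (hp0 : p0 ∈ Ioo 0 1) (hp : 0 < p j) (θ θstar : X n d) :
    2 * (1 - α j) ^ 2 / (p0 + 2 * (1 - p0) * p j) * ‖dispersionGrad (clSet c j) γ θ‖ ^ 2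
      ≤ 4 * esL hk c hc γ α L p0 p * ((1 - α j) * dispersion (clSet c j) γ (θ - θstar))
        + 2 * (2 * (1 - α j) ^ 2 / (p0 + 2 * (1 - p0) * p j)
          * ‖dispersionGrad (clSet c j) γ θstar‖ ^ 2) := by
  have hγ' : ∀ i ∈ clSet c j, 0 ≤ γ i := fun i _ => (hγ i).le
  have hD : 0 < p0 + 2 * (1 - p0) * p j := by nlinarith [hp0.1, hp0.2]
  have hesL : 2 * (1 - α j) * (clSet c j).sup' (hc j) γ / (p0 + 2 * (1 - p0) * p j)
      ≤ esL hk c hc γ α L p0 p :=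
    le_max_of_le_left (le_max_of_le_right (Finset.le_sup'
      (fun j => 2 * (1 - α j) * (clSet c j).sup' (hc j) γ / (p0 + 2 * (1 - p0) * p j))
      (Finset.mem_univ j)))
  have hκ : 2 * (1 - α j) ^ 2 / (p0 + 2 * (1 - p0) * p j) * (clSet c j).sup' (hc j) γ
      ≤ (1 - α j) * esL hk c hc γ α L p0 p :=
    calc _ = (1 - α j) * (2 * (1 - α j) * (clSet c j).sup' (hc j) γ
          / (p0 + 2 * (1 - p0) * p j)) := by ring
      _ ≤ _ := mul_le_mul_of_nonneg_left hesL (sub_nonneg.2 hα)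
  have := mul_le_four_mul_add_two_mul (by positivity) (dispersion_nonneg hγ' (θ - θstar)) hκ
    (norm_dispersionGrad_sq_le_add (M := (clSet c j).sup' (hc j) γ) hγ'
      (fun i hi => Finset.le_sup' γ hi) θ θstar)
  linarith

lemma clLoss_term_le (hk : 0 < k) (hc : ∀ j, (clSet c j).Nonempty) {f : Fin n → E d → ℝ}
    (hL : 0 < L) (hdiff : ∀ i, Differentiable ℝ (f i)) (hconv : ∀ i, ConvexOn ℝ univ (f i))
    (hsm : ∀ i, ∀ x y, ‖gradient (f i) x - gradient (f i) y‖ ≤ L * ‖x - y‖)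
    {j : Fin k} (hp0 : p0 < 1) (hp : p j < 1) (θ θstar : X n d) :
    1 / ((1 - p0) * (1 - p j)) * ‖piIndicator (clSet c j) fun i => gradient (f i) (θ i)‖ ^ 2
      ≤ 4 * esL hk c hc γ α L p0 p * ∑ i ∈ clSet c j,
          (f i (θ i) - f i (θstar i) - inner ℝ (gradient (f i) (θstar i)) (θ i - θstar i))
        + 2 * (1 / ((1 - p0) * (1 - p j))
          * ‖piIndicator (clSet c j) fun i => gradient (f i) (θstar i)‖ ^ 2) := by
  have hgrad : ∀ i x, HasGradientAt (f i) (gradient (f i) x) x :=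
    fun i x => (hdiff i x).hasGradientAt
  have hq0 : 0 < 1 - p0 := sub_pos.2 hp0
  have hqj : 0 < 1 - p j := sub_pos.2 hp
  have hesL : 1 / ((1 - p0) * (1 - p j)) * L ≤ esL hk c hc γ α L p0 p :=
    le_of_eq_of_le (by field_simp) (le_max_of_le_right
      (mul_le_mul_of_nonneg_left (Finset.le_sup' (fun j => 1 / (1 - p j)) (Finset.mem_univ j))
        (by positivity)))
  refine mul_le_four_mul_add_two_mul (by positivity) (Finset.sum_nonneg fun i _ => ?_) hesL ?_
  · linarith [(hconv i).add_inner_le_of_hasGradientAt (hgrad i (θstar i)) (θ i)]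
  · simp only [norm_piIndicator_sq, Finset.mul_sum, ← Finset.sum_add_distrib]
    exact Finset.sum_le_sum fun i _ =>
      (hconv i).norm_sq_le_of_lipschitz_gradient (hgrad i) hL (hsm i) (θ i) (θstar i)

end AsyncL2GD

/-- bounded second moment of the Async-L2GD oracle:
E‖G(θ)‖² ≤ 4𝓛(F(θ) − F(θ*)) + 2σ². -/
theorem oracle_second_moment {n k d : ℕ} (hk : 0 < k)
    (c : Fin n → Fin k) (hc : ∀ j, (clSet c j).Nonempty)
    (γ : Fin n → ℝ) (hγ : ∀ i, 0 < γ i)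
    (α : Fin k → ℝ) (hα : ∀ j, α j ∈ Set.Ioc (0 : ℝ) 1)
    (f : Fin n → E d → ℝ) (μ L : ℝ) (hμ : 0 < μ) (hL : 0 < L)
    (hdiff : ∀ i, Differentiable ℝ (f i))
    (hsc : ∀ i, ConvexOn ℝ Set.univ (fun x => f i x - μ / 2 * ‖x‖ ^ 2))
    (hsm : ∀ i, ∀ x y, ‖gradient (f i) x - gradient (f i) y‖ ≤ L * ‖x - y‖)
    (p0 : ℝ) (hp0 : p0 ∈ Set.Ioo (0 : ℝ) 1)
    (p : Fin k → ℝ) (hp : ∀ j, p j ∈ Set.Ioo (0 : ℝ) 1)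
    (τ : Fin k → ℝ) (hτ : ∀ j, τ j = p0 / (p0 + 2 * (1 - p0) * p j))
    (θstar : X n d) (hmin : ∀ θ, objF c γ α f θstar ≤ objF c γ α f θ) :
    ∀ θ : X n d,
      ∑ ω : Outcome k, wt p0 p ω * ‖Orc c γ α τ p0 p f θ ω‖ ^ 2
        ≤ 4 * esL hk c hc γ α L p0 p * (objF c γ α f θ - objF c γ α f θstar)
          + 2 * sigmaSq c γ α f p0 p θstar := by
  intro θ
  have hw₀ := globalWeight_sum_ne_zero hk hc hγ fun j => (hα j).1
  have hγ₀ : ∀ j, ∑ i ∈ clSet c j, γ i ≠ 0 :=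
    fun j => (Finset.sum_pos (fun i _ => hγ i) (hc j)).ne'
  have hconv : ∀ i, ConvexOn ℝ univ (f i) := fun i =>
    strongConvexOn_zero.1 ((strongConvexOn_iff_convex.2 (hsc i)).mono hμ.le)
  rw [objF_sub_objF_eq hdiff hw₀ hγ₀ hmin θ, sigmaSq_eq hdiff hw₀ hγ₀ θstar,
    ← sum_clSet_eq c fun _ i =>
      f i (θ i) - f i (θstar i) - inner ℝ (gradient (f i) (θstar i)) (θ i - θstar i)]
  have hφ := phi_term_le hk hc hγ (fun j => (hα j).1) hp0.1 (L := L) (p := p) θ θstar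
  have hψ := fun j => psi_term_le hk hc hγ (hα j).2 hp0 (hp j).1 (L := L) θ θstar
  have hF := fun j =>
    clLoss_term_le hk hc hL hdiff hconv hsm hp0.2 (hp j).2 (γ := γ) (α := α) θ θstar
  refine (expected_sq_norm_Orc_le hp0 hp hτ θ).trans <| (add_le_add (add_le_add hφ
    (Finset.sum_le_sum fun j _ => hψ j)) (Finset.sum_le_sum fun j _ => hF j)).trans_eq ?_
  simp only [Finset.sum_add_distrib, ← Finset.mul_sum]
  ring
end
end
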